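/- arXiv:2309.00659 — 4 statements merged into one kernel-verified Lean document; each statement's English description precedes it below -/
import Mathlib

section
/- For any nonnegative integer n and complex numbers a, b, q with |q|<1: sum_{k=0}^n (a;q)_k (b;q)_k / (q;q)_k * (-ab)^{n-k} * q^{binom(n,2)-binom(k,2)} = (a;q)_{n+1} * sum_{k=0}^n (-b)^k q^{binom(k,2)} / ((q;q)_k (q;q)_{n-k} (1 - a q^{n-k})). (Carlitz's identity, 1974) -/
/-
Both sides satisfy `X (n+1) = -ab q^n X n + (a;q)_{n+1} (b;q)_{n+1} / (q;q)_{n+1}`, `X 0 = 1`;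
for the left side this is immediate. The right side is
`(a;q)_{n+1} ∑_{i+j=n} w_i / ((q;q)_j (1 - a q^j))` with `w_i = qWeight b q i`.
Splitting `1 - a q^(i+j) = (1 - a q^j) + a q^j (1 - q^i)` and using
`(1 - q^(i+1)) w_(i+1) = -b q^i w_i` reduces its recurrence to the finite q-binomial theorem
`(b;q)_n / (q;q)_n = ∑_{i+j=n} w_i / (q;q)_j`, which is the same splitting with `a = 1`.
-/

open Finset

/-- The q-Pochhammer symbol `(a; q)_n = ∏_{j=0}^{n-1} (1 - a q^j)`. -/
noncomputable def qPoch (a q : ℂ) (n : ℕ) : ℂ := ∏ j ∈ Finset.range n, (1 - a * q ^ j)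

lemma qPoch_zero (a q : ℂ) : qPoch a q 0 = 1 := prod_range_zero _

lemma qPoch_succ (a q : ℂ) (n : ℕ) : qPoch a q (n + 1) = qPoch a q n * (1 - a * q ^ n) :=
  prod_range_succ _ _

lemma qPoch_self_succ (q : ℂ) (n : ℕ) :
    qPoch q q (n + 1) = qPoch q q n * (1 - q ^ (n + 1)) := by
  rw [qPoch_succ, ← pow_succ']

lemma qPoch_ne_zero {a q : ℂ} {n : ℕ} (h : ∀ j < n, a * q ^ j ≠ 1) : qPoch a q n ≠ 0 :=
  prod_ne_zero_iff.mpr fun j hj => sub_ne_zero.mpr (h j (mem_range.mp hj)).symm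

lemma one_sub_pow_succ_ne_zero {q : ℂ} (hq : ‖q‖ < 1) (n : ℕ) : 1 - q ^ (n + 1) ≠ 0 := by
  refine sub_ne_zero.mpr fun h => ?_
  have := pow_lt_one₀ (norm_nonneg q) hq n.succ_ne_zero
  rw [← norm_pow, ← h, norm_one] at this
  exact lt_irrefl 1 this

lemma qPoch_self_ne_zero {q : ℂ} (hq : ‖q‖ < 1) (n : ℕ) : qPoch q q n ≠ 0 :=
  qPoch_ne_zero fun j _ => by
    rw [← pow_succ']; exact (sub_ne_zero.mp (one_sub_pow_succ_ne_zero hq j)).symm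

lemma one_sub_pow_succ_mul_inv_qPoch_self_succ {q : ℂ} (hq : ‖q‖ < 1) (n : ℕ) :
    (1 - q ^ (n + 1)) * (qPoch q q (n + 1))⁻¹ = (qPoch q q n)⁻¹ := by
  rw [qPoch_self_succ, mul_inv_rev, mul_inv_cancel_left₀ (one_sub_pow_succ_ne_zero hq n)]

lemma choose_two_succ (n : ℕ) : (n + 1).choose 2 = n.choose 2 + n := by
  rw [Nat.choose_succ_succ', Nat.choose_one_right, add_comm]

theorem sum_range_succ_mul_pow_mul_pow_choose_two_sub {R : Type*} [CommSemiring R]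
    (u : ℕ → R) (z q : R) (n : ℕ) :
    ∑ k ∈ range (n + 1 + 1), u k * z ^ (n + 1 - k) * q ^ ((n + 1).choose 2 - k.choose 2) =
      z * q ^ n * ∑ k ∈ range (n + 1), u k * z ^ (n - k) * q ^ (n.choose 2 - k.choose 2)
        + u (n + 1) := by
  rw [sum_range_succ, mul_sum]
  simp only [Nat.sub_self, pow_zero, mul_one]
  congr 1
  refine sum_congr rfl fun k hk => ?_
  have hk : k ≤ n := Nat.lt_succ_iff.mp (mem_range.mp hk)
  have hchoose : (n + 1).choose 2 - k.choose 2 = n + (n.choose 2 - k.choose 2) := by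
    have := Nat.choose_le_choose 2 hk
    rw [choose_two_succ]
    omega
  rw [hchoose, Nat.succ_sub hk, pow_succ, pow_add]
  ring

noncomputable def qWeight (b q : ℂ) (i : ℕ) : ℂ :=
  (-b) ^ i * q ^ i.choose 2 * (qPoch q q i)⁻¹

lemma one_sub_pow_succ_mul_qWeight_succ {q : ℂ} (hq : ‖q‖ < 1) (b : ℂ) (i : ℕ) :
    (1 - q ^ (i + 1)) * qWeight b q (i + 1) = -b * q ^ i * qWeight b q i := by
  rw [qWeight, qWeight, qPoch_self_succ, choose_two_succ, mul_inv_rev, pow_succ (-b), pow_add q]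
  linear_combination (-b * q ^ i * ((-b) ^ i * q ^ i.choose 2 * (qPoch q q i)⁻¹)) *
    mul_inv_cancel₀ (one_sub_pow_succ_ne_zero hq i)

lemma one_sub_mul_pow_succ_mul_sum_antidiagonal_succ {q : ℂ} (hq : ‖q‖ < 1) (a b : ℂ)
    (h : ℕ → ℂ) (n : ℕ) :
    (1 - a * q ^ (n + 1)) * ∑ p ∈ antidiagonal (n + 1), qWeight b q p.1 * h p.2 =
      ∑ p ∈ antidiagonal (n + 1), qWeight b q p.1 * ((1 - a * q ^ p.2) * h p.2)
        - a * b * q ^ n * ∑ p ∈ antidiagonal n, qWeight b q p.1 * h p.2 := by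
  calc _ = ∑ p ∈ antidiagonal (n + 1), qWeight b q p.1 * ((1 - a * q ^ p.2) * h p.2)
          + a * ∑ p ∈ antidiagonal (n + 1),
              (1 - q ^ p.1) * qWeight b q p.1 * (q ^ p.2 * h p.2) := by
        rw [mul_sum, mul_sum, ← sum_add_distrib]
        refine sum_congr rfl fun p hp => ?_
        rw [← mem_antidiagonal.mp hp]
        ring
    _ = ∑ p ∈ antidiagonal (n + 1), qWeight b q p.1 * ((1 - a * q ^ p.2) * h p.2)
          + a * ∑ p ∈ antidiagonal n, -b * q ^ p.1 * qWeight b q p.1 * (q ^ p.2 * h p.2) := by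
        congr 2
        rw [Nat.sum_antidiagonal_succ]
        simp only [pow_zero, sub_self, zero_mul, zero_add, one_sub_pow_succ_mul_qWeight_succ hq]
    _ = _ := by
        rw [sub_eq_add_neg, mul_sum, mul_sum, ← sum_neg_distrib]
        congr 1
        refine sum_congr rfl fun p hp => ?_
        rw [← mem_antidiagonal.mp hp]
        ring

theorem qPoch_div_qPoch_self_eq_sum_antidiagonal {q : ℂ} (hq : ‖q‖ < 1) (b : ℂ) (n : ℕ) :
    qPoch b q n / qPoch q q n =
      ∑ p ∈ antidiagonal n, qWeight b q p.1 * (qPoch q q p.2)⁻¹ := by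
  induction n with
  | zero => simp [qWeight, qPoch_zero]
  | succ n ih =>
    have shift :
        ∑ p ∈ antidiagonal (n + 1), qWeight b q p.1 * ((1 - 1 * q ^ p.2) * (qPoch q q p.2)⁻¹)
          = ∑ p ∈ antidiagonal n, qWeight b q p.1 * (qPoch q q p.2)⁻¹ := by
      rw [Nat.sum_antidiagonal_succ']
      simp only [one_mul, pow_zero, sub_self, zero_mul, mul_zero, zero_add,
        one_sub_pow_succ_mul_inv_qPoch_self_succ hq]
    have step :=
      one_sub_mul_pow_succ_mul_sum_antidiagonal_succ hq 1 b (fun j => (qPoch q q j)⁻¹) n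
    rw [shift, ← ih, one_mul, one_mul] at step
    apply mul_left_cancel₀ (one_sub_pow_succ_ne_zero hq n)
    rw [step, qPoch_succ, qPoch_self_succ]
    field_simp [qPoch_self_ne_zero hq n, one_sub_pow_succ_ne_zero hq n]

noncomputable def carlitzSum (a b q : ℂ) (n : ℕ) : ℂ :=
  ∑ p ∈ antidiagonal n, qWeight b q p.1 * (qPoch q q p.2 * (1 - a * q ^ p.2))⁻¹

lemma one_sub_mul_pow_succ_mul_carlitzSum_succ {a q : ℂ} (hq : ‖q‖ < 1) (b : ℂ) {n : ℕ}
    (ha : ∀ j ≤ n + 1, a * q ^ j ≠ 1) :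
    (1 - a * q ^ (n + 1)) * carlitzSum a b q (n + 1) =
      qPoch b q (n + 1) / qPoch q q (n + 1) - a * b * q ^ n * carlitzSum a b q n := by
  rw [carlitzSum, carlitzSum, one_sub_mul_pow_succ_mul_sum_antidiagonal_succ hq a b
    fun j => (qPoch q q j * (1 - a * q ^ j))⁻¹,
    qPoch_div_qPoch_self_eq_sum_antidiagonal hq]
  congr 1
  refine sum_congr rfl fun p hp => ?_
  have hp : p.2 ≤ n + 1 := HasAntidiagonal.antidiagonal.snd_le hp
  rw [mul_inv_rev, mul_inv_cancel_left₀ (sub_ne_zero.mpr (ha p.2 hp).symm)]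

lemma carlitzSum_eq_sum_range (a b q : ℂ) (n : ℕ) :
    carlitzSum a b q n = ∑ k ∈ range (n + 1),
      (-b) ^ k * q ^ (k.choose 2)
        / (qPoch q q k * qPoch q q (n - k) * (1 - a * q ^ (n - k))) := by
  rw [carlitzSum, Nat.sum_antidiagonal_eq_sum_range_succ
    fun i j => qWeight b q i * (qPoch q q j * (1 - a * q ^ j))⁻¹]
  refine sum_congr rfl fun k _ => ?_
  rw [qWeight, div_eq_mul_inv, mul_assoc (qPoch q q k), mul_inv (qPoch q q k), mul_assoc]

/-- Carlitz's identity (1974). -/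
theorem carlitz_identity (n : ℕ) (a b q : ℂ) (hq : ‖q‖ < 1)
    (ha : ∀ j ≤ n, a * q ^ j ≠ 1) :
    ∑ k ∈ range (n + 1),
        qPoch a q k * qPoch b q k / qPoch q q k * (-(a * b)) ^ (n - k)
          * q ^ (n.choose 2 - k.choose 2)
      = qPoch a q (n + 1) *
        ∑ k ∈ range (n + 1),
          (-b) ^ k * q ^ (k.choose 2)
            / (qPoch q q k * qPoch q q (n - k) * (1 - a * q ^ (n - k))) := by
  rw [← carlitzSum_eq_sum_range]
  induction n with
  | zero =>
    have ha₀ : 1 - a ≠ 0 :=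
      sub_ne_zero.mpr fun h => ha 0 le_rfl (by rw [pow_zero, mul_one, ← h])
    simp [carlitzSum, qWeight, qPoch_zero, qPoch_succ, ha₀]
  | succ n ih =>
    rw [sum_range_succ_mul_pow_mul_pow_choose_two_sub, ih fun j hj => ha j (Nat.le_succ_of_le hj),
      qPoch_succ a q (n + 1), mul_assoc (qPoch a q (n + 1)),
      one_sub_mul_pow_succ_mul_carlitzSum_succ hq b ha]
    ring
end

section
/- Let eta_a be the q-shift operator acting by eta_a f(a) = f(aq), and let Delta_a^k = (eta_a - 1)(eta_a - q)...(eta_a - q^{k-1}). Then for any function f and any nonnegative integer n: sum_{k=0}^n [n choose k]_q b^{n-k} (b;q)_k eta_a^k Delta_a^{n-k} f(a) = sum_{k=0}^n [n choose k]_q (-b)^k q^{binom(k,2)} f(a q^{n-k}). -/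
/-!
Expanding `Δ_a^{n-k}` by the q-binomial theorem turns the left side into a combination of the
values `f (a q^m)`. Since `[n,k] [n-k,m-k] = [n,m] [m,k]`, the coefficient of `f (a q^m)` is
`[n,m] (-1)^(n-m) q^C(n-m,2) b^(n-m)` times `∑_k [m,k] b^(m-k) (b;q)_k`, and this last sum is `1`
(a q-analogue of `∑_k C(m,k) b^(m-k) (1-b)^k = 1`). Reflecting the right side gives the same
coefficients. Both expansions are inductions on the q-Pascal rule.
-/

open Finset

/-- The Gaussian binomial coefficient `[n choose k]_q`. -/
noncomputable def qBinom (q : ℂ) (n k : ℕ) : ℂ :=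
  qPoch q q n / (qPoch q q k * qPoch q q (n - k))

/-- `Δ_a^k = (η_a - 1)(η_a - q) ⋯ (η_a - q^{k-1})` where `η_a f(a) = f(aq)`. -/
noncomputable def deltaOp (q : ℂ) : ℕ → (ℂ → ℂ) → (ℂ → ℂ)
  | 0, f => f
  | k + 1, f => fun a => deltaOp q k f (a * q) - q ^ k * deltaOp q k f a

lemma one_sub_self_mul_pow_ne_zero {q : ℂ} {j : ℕ} (h : qPoch q q (j + 1) ≠ 0) :
    1 - q * q ^ j ≠ 0 :=
  right_ne_zero_of_mul (qPoch_succ q q j ▸ h)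

lemma qBinom_zero_right {q : ℂ} {n : ℕ} (h : qPoch q q n ≠ 0) : qBinom q n 0 = 1 := by
  rw [qBinom, qPoch_zero, one_mul, Nat.sub_zero, div_self h]

lemma qBinom_self {q : ℂ} {n : ℕ} (h : qPoch q q n ≠ 0) : qBinom q n n = 1 := by
  rw [qBinom, Nat.sub_self, qPoch_zero, mul_one, div_self h]

lemma qBinom_symm (q : ℂ) {n m : ℕ} (h : m ≤ n) : qBinom q n (n - m) = qBinom q n m := by
  rw [qBinom, qBinom, Nat.sub_sub_self h, mul_comm]

lemma qBinom_succ_succ {q : ℂ} (hq : ∀ n, qPoch q q n ≠ 0) {n k : ℕ} (hk : k < n) :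
    qBinom q (n + 1) (k + 1) = q ^ (k + 1) * qBinom q n (k + 1) + qBinom q n k := by
  obtain ⟨m, rfl⟩ : ∃ m, n = k + 1 + m := ⟨n - (k + 1), by omega⟩
  simp only [qBinom, show k + 1 + m + 1 - (k + 1) = m + 1 by omega,
    show k + 1 + m - (k + 1) = m by omega, show k + 1 + m - k = m + 1 by omega, qPoch_succ]
  have := hq (k + 1 + m); have := hq k; have := hq m
  have := one_sub_self_mul_pow_ne_zero (hq (k + 1 + m + 1))
  have := one_sub_self_mul_pow_ne_zero (hq (k + 1))
  have := one_sub_self_mul_pow_ne_zero (hq (m + 1))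
  field_simp
  ring

lemma qBinom_mul_qBinom {q : ℂ} (hq : ∀ n, qPoch q q n ≠ 0) {k m n : ℕ} (hkm : k ≤ m)
    (hmn : m ≤ n) : qBinom q n k * qBinom q (n - k) (m - k) = qBinom q n m * qBinom q m k := by
  obtain ⟨i, rfl⟩ : ∃ i, m = k + i := ⟨m - k, by omega⟩
  obtain ⟨j, rfl⟩ : ∃ j, n = k + i + j := ⟨n - (k + i), by omega⟩
  simp only [qBinom, show k + i + j - k = i + j by omega, show k + i - k = i by omega,
    show i + j - i = j by omega, show k + i + j - (k + i) = j by omega]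
  have := hq (k + i + j); have := hq k; have := hq i; have := hq j
  have := hq (i + j); have := hq (k + i)
  field_simp

/-- The q-Pascal rule in summed form. Termwise it fails at `k = m`, where the junk value of
`qBinom q m (m + 1)` is not `0`. -/
lemma sum_qBinom_succ_mul {q : ℂ} (hq : ∀ n, qPoch q q n ≠ 0) (m : ℕ) (g : ℕ → ℂ) :
    ∑ k ∈ range (m + 2), qBinom q (m + 1) k * g k
      = ∑ k ∈ range (m + 1), qBinom q m k * (q ^ k * g k + g (k + 1)) := by
  simp only [mul_add, sum_add_distrib]
  rw [sum_range_succ', sum_range_succ, sum_range_succ' (fun k => qBinom q m k * (q ^ k * g k)),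
    sum_range_succ (fun k => qBinom q m k * g (k + 1))]
  rw [sum_congr rfl fun k hk => by rw [qBinom_succ_succ hq (mem_range.mp hk)]]
  simp only [add_mul, sum_add_distrib, qBinom_self (hq _), qBinom_zero_right (hq _)]
  ring_nf

lemma sum_qBinom_mul_pow_mul_qPoch {q : ℂ} (hq : ∀ n, qPoch q q n ≠ 0) (b : ℂ) (m : ℕ) :
    ∑ k ∈ range (m + 1), qBinom q m k * (b ^ (m - k) * qPoch b q k) = 1 := by
  induction m with
  | zero => simp [qBinom, qPoch]
  | succ m ih =>
    rw [sum_qBinom_succ_mul hq, ← ih]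
    refine sum_congr rfl fun k hk => ?_
    rw [Nat.add_sub_add_right, Nat.sub_add_comm (mem_range_succ_iff.mp hk), pow_succ, qPoch_succ]
    ring

lemma deltaOp_eq_sum {q : ℂ} (hq : ∀ n, qPoch q q n ≠ 0) (f : ℂ → ℂ) (m : ℕ) (a : ℂ) :
    deltaOp q m f a = ∑ i ∈ range (m + 1),
      qBinom q m i * ((-1) ^ (m - i) * q ^ (m - i).choose 2 * f (a * q ^ i)) := by
  induction m generalizing a with
  | zero => simp [deltaOp, qBinom, qPoch]
  | succ m ih =>
    dsimp only [deltaOp]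
    rw [ih, ih, sum_qBinom_succ_mul hq, mul_sum, ← sum_sub_distrib]
    refine sum_congr rfl fun k hk => ?_
    obtain ⟨j, rfl⟩ := Nat.exists_eq_add_of_le (mem_range_succ_iff.mp hk)
    rw [show k + j + 1 - k = j + 1 by omega, show k + j + 1 - (k + 1) = j by omega,
      show k + j - k = j by omega, Nat.choose_succ_succ', Nat.choose_one_right,
      mul_assoc a q, ← pow_succ']
    ring

lemma sum_qBinom_mul_qBinom_mul_pow_mul_qPoch {q : ℂ} (hq : ∀ n, qPoch q q n ≠ 0) (b : ℂ)
    {m n : ℕ} (hmn : m ≤ n) :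
    ∑ k ∈ range (m + 1), qBinom q n k * qBinom q (n - k) (m - k) * (b ^ (n - k) * qPoch b q k)
      = qBinom q n m * b ^ (n - m) := by
  calc _ = ∑ k ∈ range (m + 1),
          qBinom q n m * b ^ (n - m) * (qBinom q m k * (b ^ (m - k) * qPoch b q k)) := by
        refine sum_congr rfl fun k hk => ?_
        have hkm := mem_range_succ_iff.mp hk
        rw [qBinom_mul_qBinom hq hkm hmn, ← Nat.sub_add_sub_cancel hmn hkm, pow_add]
        ring
    _ = qBinom q n m * b ^ (n - m) := by
        rw [← mul_sum, sum_qBinom_mul_pow_mul_qPoch hq, mul_one]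

/-- Operator form of Carlitz's identity:
`∑_k [n,k]_q b^{n-k} (b;q)_k η_a^k Δ_a^{n-k} f(a) = ∑_k [n,k]_q (-b)^k q^{C(k,2)} f(a q^{n-k})`. -/
theorem carlitz_operator_identity (n : ℕ) (a b q : ℂ) (hq : ‖q‖ < 1)
    (f : ℂ → ℂ) :
    ∑ k ∈ range (n + 1),
        qBinom q n k * b ^ (n - k) * qPoch b q k * deltaOp q (n - k) f (a * q ^ k)
      = ∑ k ∈ range (n + 1),
        qBinom q n k * (-b) ^ k * q ^ (k.choose 2) * f (a * q ^ (n - k)) := by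
  have hq' := qPoch_self_ne_zero hq
  set c : ℕ → ℂ := fun m => (-1) ^ (n - m) * q ^ (n - m).choose 2 * f (a * q ^ m)
  calc _ = ∑ k ∈ range (n + 1), ∑ i ∈ range (n + 1 - k),
        qBinom q n k * qBinom q (n - k) i * (b ^ (n - k) * qPoch b q k) * c (k + i) := by
        refine sum_congr rfl fun k hk => ?_
        rw [deltaOp_eq_sum hq', mul_sum, Nat.sub_add_comm (mem_range_succ_iff.mp hk)]
        refine sum_congr rfl fun i _ => ?_
        simp only [c, mul_assoc a, ← pow_add, Nat.sub_add_eq]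
        ring
    _ = ∑ m ∈ range (n + 1), ∑ k ∈ range (m + 1),
        qBinom q n k * qBinom q (n - k) (m - k) * (b ^ (n - k) * qPoch b q k) * c m := by
        rw [← sum_range_diag_flip]
        refine sum_congr rfl fun m _ => sum_congr rfl fun k hk => ?_
        rw [Nat.add_sub_cancel' (mem_range_succ_iff.mp hk)]
    _ = ∑ m ∈ range (n + 1), qBinom q n m * b ^ (n - m) * c m := by
        refine sum_congr rfl fun m hm => ?_
        rw [← sum_mul, sum_qBinom_mul_qBinom_mul_pow_mul_qPoch hq' b (mem_range_succ_iff.mp hm)]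
    _ = _ := by
        rw [← sum_range_reflect]
        refine sum_congr rfl fun m hm => ?_
        have hmn := mem_range_succ_iff.mp hm
        simp only [c, Nat.add_sub_cancel, Nat.sub_sub_self hmn, qBinom_symm q hmn]
        rw [neg_pow]
        ring
end

section
/- If f(a) = (ay;q)_∞ / (ax;q)_∞, then for every nonnegative integer n, Delta_a^n f(a) = ((a y q^n;q)_∞ / (ax;q)_∞) * P_n(x,y) * (-a)^n * q^{binom(n,2)}, where Delta_a^n = (eta_a - 1)(eta_a - q)...(eta_a - q^{n-1}) and P_n(x,y) = prod_{j=0}^{n-1}(x - y q^j). -/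
/-!
Induct on `n`. Apply `η_a - q^n` to the formula for `Δ_a^n f` and peel off the first factor of
`(a x; q)_∞ = (1 - a x) (a x q; q)_∞` and of `(a y q^n; q)_∞ = (1 - a y q^n) (a y q^{n+1}; q)_∞`.
The two resulting terms then differ only by `(1 - a x) - (1 - a y q^n) = -a (x - y q^n)`, which
supplies the next factor of `P_{n+1}(x, y)`, one more `-a` and the extra `q^n` in `q^{binom(n+1,2)}`.
-/

open Finset

section QPochhammer

variable {R : Type*} [NormedCommRing R] [NormOneClass R] {q : R}

theorem multipliable_one_sub_mul_pow [CompleteSpace R] (hq : ‖q‖ < 1) (c : R) :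
    Multipliable fun j : ℕ => 1 - c * q ^ j := by
  have hsum : Summable fun j : ℕ => ‖-(c * q ^ j)‖ := by
    refine .of_nonneg_of_le (fun _ => norm_nonneg _) (fun j => ?_)
      ((summable_geometric_of_lt_one (norm_nonneg q) hq).mul_left ‖c‖)
    rw [norm_neg]
    exact (norm_mul_le _ _).trans (by gcongr; exact norm_pow_le _ _)
  simpa only [sub_eq_add_neg] using multipliable_one_add_of_summable hsum

theorem tprod_one_sub_mul_pow_eq [CompleteSpace R] (hq : ‖q‖ < 1) (c : R) :
    ∏' j : ℕ, (1 - c * q ^ j) = (1 - c) * ∏' j : ℕ, (1 - c * q * q ^ j) := by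
  have hshift : ∀ j : ℕ, 1 - c * q ^ (j + 1) = 1 - c * q * q ^ j := fun j => by ring
  rw [tprod_eq_zero_mul' (by simpa only [hshift] using multipliable_one_sub_mul_pow hq (c * q))]
  simp only [pow_zero, mul_one, hshift]

end QPochhammer

theorem deltaOp_succ_apply (q : ℂ) (n : ℕ) (f : ℂ → ℂ) (a : ℂ) :
    deltaOp q (n + 1) f a = deltaOp q n f (a * q) - q ^ n * deltaOp q n f a :=
  rfl

theorem delta_infinite_product_general (q x y : ℂ)
    (hq : ‖q‖ < 1) (n : ℕ) (a : ℂ)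
    (hx : ∀ j : ℕ, a * x * q ^ j ≠ 1) :
    deltaOp q n (fun t => (∏' j : ℕ, (1 - t * y * q ^ j)) / (∏' j : ℕ, (1 - t * x * q ^ j))) a
      = (∏' j : ℕ, (1 - a * y * q ^ n * q ^ j)) / (∏' j : ℕ, (1 - a * x * q ^ j))
          * (∏ j ∈ Finset.range n, (x - y * q ^ j)) * (-a) ^ n * q ^ (n.choose 2) := by
  induction n generalizing a with
  | zero => simp [deltaOp]
  | succ n ih =>
    have hxq : ∀ j : ℕ, a * q * x * q ^ j ≠ 1 := fun j h => hx (j + 1) (by rw [← h]; ring)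
    have hax : 1 - a * x ≠ 0 := sub_ne_zero.2 fun h => hx 0 (by simpa using h.symm)
    rw [deltaOp_succ_apply, ih (a * q) hxq, ih a hx, mul_right_comm a q x,
      show a * q * y * q ^ n = a * y * q ^ (n + 1) by ring,
      tprod_one_sub_mul_pow_eq hq (a * x), tprod_one_sub_mul_pow_eq hq (a * y * q ^ n),
      show a * y * q ^ n * q = a * y * q ^ (n + 1) by ring, prod_range_succ,
      Nat.choose_succ_succ', Nat.choose_one_right]
    rcases eq_or_ne (∏' j : ℕ, (1 - a * x * q * q ^ j)) 0 with hC | hC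
    · simp [hC]
    · field_simp
      ring

theorem delta_infinite_product (q x y : ℂ) (hq0 : 0 < ‖q‖)
    (hq : ‖q‖ < 1) (n : ℕ) (a : ℂ)
    (hx : ∀ j : ℕ, a * x * q ^ j ≠ 1) :
    deltaOp q n (fun t => (∏' j : ℕ, (1 - t * y * q ^ j)) / (∏' j : ℕ, (1 - t * x * q ^ j))) a
      = (∏' j : ℕ, (1 - a * y * q ^ n * q ^ j)) / (∏' j : ℕ, (1 - a * x * q ^ j))
          * (∏ j ∈ Finset.range n, (x - y * q ^ j)) * (-a) ^ n * q ^ (n.choose 2) :=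
  delta_infinite_product_general q x y hq n a hx
end

section
/- For every odd prime p and integer m with 1 ≤ m ≤ (p+1)/2: sum_{k=0}^{p-m} 2^k (m - 1/2)_k / k! ≡ (-1)^{(p-1)/2 + m - 1} (mod p), where (x)_k = x(x+1)...(x+k-1) is the rising Pochhammer symbol. Equivalently, each term 2^k (m-1/2)_k / k! = prod_{j=0}^{k-1} (2m-1+2j)/(j+1) is an integer-valued rational with denominator coprime to p. -/
open Finset

/-- `A ≡ B (mod p^e)` in `ℤ` localized at the odd prime `p`: the difference of the
rationals can be written as `p^e · a / b` with `p ∤ b`. -/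
def CongrModPrimePow (p : ℕ) (e : ℕ) (A B : ℚ) : Prop :=
  ∃ a b : ℤ, ¬ (p : ℤ) ∣ b ∧ (A - B) * (b : ℚ) = (p : ℚ) ^ e * (a : ℚ)

/-!
With `K = (p + 1)/2 - m` we have `2m - 1 + 2j = p - 2(K - j)`, so the `k`-th term
`∏_{j<k} (2m - 1 + 2j) / k!` is congruent mod `p` to `(-2)^k K(K-1)⋯(K-k+1) / k! = (-2)^k C(K, k)`;
as `k ≤ p - m < p`, the denominator `k!` is prime to `p`. The sum of these is `(1 - 2)^K`, and
`K ≡ (p - 1)/2 + m - 1 (mod 2)`.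
-/

namespace CongrModPrimePow

variable {p e : ℕ}

theorem of_mul_eq {A : ℚ} {B X d : ℤ} (hd : ¬ (p : ℤ) ∣ d) (hA : A * d = X)
    (hX : B * d ≡ X [ZMOD p ^ e]) : CongrModPrimePow p e A B := by
  obtain ⟨a, ha⟩ := Int.modEq_iff_dvd.mp hX
  refine ⟨a, d, hd, ?_⟩
  have := congrArg (fun z : ℤ => (z : ℚ)) ha
  push_cast at this
  linear_combination hA + this

theorem refl (hp : p.Prime) (A : ℚ) : CongrModPrimePow p e A A :=
  ⟨0, 1, by exact_mod_cast hp.not_dvd_one, by simp⟩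

theorem add (hp : p.Prime) {A B C D : ℚ} (hAB : CongrModPrimePow p e A B)
    (hCD : CongrModPrimePow p e C D) : CongrModPrimePow p e (A + C) (B + D) := by
  obtain ⟨a, b, hb, h⟩ := hAB
  obtain ⟨c, d, hd, h'⟩ := hCD
  refine ⟨a * d + c * b, b * d, ?_, ?_⟩
  · exact fun hbd => (Nat.prime_iff_prime_int.mp hp).dvd_or_dvd hbd |>.elim hb hd
  · push_cast
    linear_combination (d : ℚ) * h + (b : ℚ) * h'

theorem sum (hp : p.Prime) {ι : Type*} (s : Finset ι) {f g : ι → ℚ}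
    (h : ∀ i ∈ s, CongrModPrimePow p e (f i) (g i)) :
    CongrModPrimePow p e (∑ i ∈ s, f i) (∑ i ∈ s, g i) := by
  induction s using Finset.cons_induction with
  | empty => exact refl hp 0
  | cons i s _ ih =>
    rw [sum_cons, sum_cons]
    exact add hp (h i (mem_cons_self i s)) (ih fun j hj => h j (mem_cons_of_mem hj))

end CongrModPrimePow

theorem ascPochhammer_eval_eq_prod_range {R : Type*} [CommSemiring R] (x : R) :
    ∀ k : ℕ, (ascPochhammer R k).eval x = ∏ j ∈ range k, (x + j)
  | 0 => by simp
  | k + 1 => by rw [ascPochhammer_succ_eval, ascPochhammer_eval_eq_prod_range x k, prod_range_succ]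

theorem two_pow_mul_ascPochhammer_eval_sub_half (m : ℤ) (k : ℕ) :
    2 ^ k * (ascPochhammer ℚ k).eval ((m : ℚ) - 1 / 2) =
      ((∏ j ∈ range k, (2 * (m + j) - 1) : ℤ) : ℚ) := by
  rw [ascPochhammer_eval_eq_prod_range, ← card_range k, ← prod_const, card_range,
    ← prod_mul_distrib]
  push_cast
  exact prod_congr rfl fun j _ => by ring

theorem neg_two_pow_mul_descFactorial_modEq_prod {p m K : ℕ} (hmK : 2 * (m + K) = p + 1) (k : ℕ) :
    (-2) ^ k * (K.descFactorial k : ℤ) ≡ ∏ j ∈ range k, (2 * ((m : ℤ) + j) - 1) [ZMOD p] := by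
  rw [← descPochhammer_eval_eq_descFactorial, descPochhammer_eval_eq_prod_range,
    ← card_range k, ← prod_const, card_range, ← prod_mul_distrib]
  refine Int.ModEq.prod fun j _ => Int.modEq_iff_dvd.mpr ⟨1, ?_⟩
  have : (2 * (m + K) : ℤ) = p + 1 := by exact_mod_cast hmK
  linear_combination this

theorem sum_range_pow_mul_choose_of_le {R : Type*} [CommSemiring R] (x : R) {K n : ℕ}
    (hKn : K ≤ n) : ∑ k ∈ range (n + 1), x ^ k * K.choose k = (x + 1) ^ K := by
  rw [add_pow]
  simp only [one_pow, mul_one]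
  refine (sum_subset (range_subset_range.mpr (by omega)) fun k _ hk => ?_).symm
  rw [Nat.choose_eq_zero_of_lt (by simpa using hk), Nat.cast_zero, mul_zero]

theorem congrModPrimePow_two_pow_mul_ascPochhammer_div_factorial {p m K k : ℕ}
    (hp : p.Prime) (hmK : 2 * (m + K) = p + 1) (hkp : k < p) :
    CongrModPrimePow p 1 (2 ^ k * (ascPochhammer ℚ k).eval ((m : ℚ) - 1 / 2) / k.factorial)
      ((-2) ^ k * K.choose k) := by
  have hfac : ¬ (p : ℤ) ∣ k.factorial :=
    fun h => absurd (hp.dvd_factorial.mp (Int.natCast_dvd_natCast.mp h)) (by omega)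
  rw [show ((-2 : ℚ) ^ k * K.choose k) = (((-2) ^ k * K.choose k : ℤ) : ℚ) by push_cast; rfl]
  refine .of_mul_eq (X := ∏ j ∈ range k, (2 * ((m : ℤ) + j) - 1)) hfac ?_ ?_
  · have := two_pow_mul_ascPochhammer_eval_sub_half m k
    push_cast at this ⊢
    rw [div_mul_cancel₀ _ (by positivity), this]
  · rw [pow_one, mul_assoc, ← Nat.cast_mul, mul_comm (K.choose k),
      ← Nat.descFactorial_eq_factorial_mul_choose]
    exact_mod_cast neg_two_pow_mul_descFactorial_modEq_prod hmK k

theorem rising_factorial_congruence (p : ℕ) (hp : p.Prime) (hodd : Odd p)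
    (m : ℕ) (hm1 : 1 ≤ m) (hm2 : m ≤ (p + 1) / 2) :
    CongrModPrimePow p 1
      (∑ k ∈ range (p - m + 1),
        2 ^ k * (ascPochhammer ℚ k).eval ((m : ℚ) - 1 / 2) / (k.factorial : ℚ))
      ((-1) ^ ((p - 1) / 2 + m - 1)) := by
  obtain ⟨r, hr⟩ := hodd
  set K := (p + 1) / 2 - m
  have hmK : 2 * (m + K) = p + 1 := by omega
  have hsign : ((-1) ^ ((p - 1) / 2 + m - 1) : ℚ) =
      ∑ k ∈ range (p - m + 1), (-2 : ℚ) ^ k * K.choose k := by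
    rw [sum_range_pow_mul_choose_of_le _ (by omega),
      show (p - 1) / 2 + m - 1 = K + 2 * (m - 1) by omega, pow_add, pow_mul]
    norm_num
  rw [hsign]
  refine CongrModPrimePow.sum hp _ fun k hk => ?_
  exact congrModPrimePow_two_pow_mul_ascPochhammer_div_factorial hp hmK (by simp at hk; omega)
end
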